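/- arXiv:2504.13794 — 7 statements merged into one kernel-verified Lean document; each statement's English description precedes it below -/
import Mathlib

section
/- Let L ⊆ GS and suppose the NetKAT Myhill–Nerode relation ≡_L has only finitely many equivalence classes. Then the quotient automaton P_L is well defined (its transition function ∂ and observation function λ do not depend on the choice of class representatives), it satisfies the spelling property (hence is a PNKA), and its language is exactly L, i.e. L(P_L) = L. -/
namespace NetKATLearn

variable {F V : Type}

/-- A packet assigns a value to each field. -/
abbrev Packet (F V : Type) : Type := F → V

/-- A guarded string `(α, w, β)`, representing the trace `α·(w₁·dup)⋯(wₖ·dup)·β`. -/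
abbrev GString (F V : Type) : Type := Packet F V × List (Packet F V) × Packet F V

/-- A guarded string prefix `(α, w)`. -/
abbrev GPrefix (F V : Type) : Type := Packet F V × List (Packet F V)

/-- A guarded string suffix `(m, β)`. -/
abbrev GSuffix (F V : Type) : Type := List (Packet F V) × Packet F V

/-- `last(p)`: the last element of `w` if `w` is nonempty, and `α` otherwise. -/
def lastP (p : GPrefix F V) : Packet F V := p.2.getLast?.getD p.1

-- Partial concatenation `p ◆ g` of a prefix with a guarded string:
-- defined iff `last p = g.1`, in which case it is `(p.1, p.2 ++ g.2.1, g.2.2)`.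
open Classical in
noncomputable def pconcat (p : GPrefix F V) (g : GString F V) : Option (GString F V) :=
  if lastP p = g.1 then some (p.1, p.2 ++ g.2.1, g.2.2) else none

/-- The NetKAT Myhill–Nerode relation `s ≡_L t`: for every guarded string `g`,
`s ◆ g` and `t ◆ g` are both undefined, or both defined and agree on membership in `L`. -/
def MN (L : Set (GString F V)) (s t : GPrefix F V) : Prop :=
  ∀ g : GString F V,
    (pconcat s g).isSome = (pconcat t g).isSome ∧
      ∀ x ∈ pconcat s g, ∀ y ∈ pconcat t g, (x ∈ L ↔ y ∈ L)

theorem mn_equivalence (L : Set (GString F V)) : Equivalence (MN L) := by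
  constructor
  · intro s g
    refine ⟨rfl, fun x hx y hy => ?_⟩
    rw [Option.mem_def] at hx hy
    rw [hx, Option.some_inj] at hy
    subst hy
    exact Iff.rfl
  · intro s t h g
    obtain ⟨h1, h2⟩ := h g
    exact ⟨h1.symm, fun x hx y hy => (h2 y hy x hx).symm⟩
  · intro s t u h h' g
    obtain ⟨h1, h2⟩ := h g
    obtain ⟨h3, h4⟩ := h' g
    refine ⟨h1.trans h3, fun x hx y hy => ?_⟩
    have hs : (pconcat t g).isSome := by
      rw [← h1]
      exact Option.isSome_iff_exists.mpr ⟨x, hx⟩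
    obtain ⟨z, hz⟩ := Option.isSome_iff_exists.mp hs
    exact (h2 x hx z hz).trans (h4 z hz y hy)

/-- The setoid on prefixes given by the NetKAT Myhill–Nerode relation of `L`. -/
def mnSetoid (L : Set (GString F V)) : Setoid (GPrefix F V) :=
  ⟨MN L, mn_equivalence L⟩

/-- A packet-state NetKAT automaton (PNKA) with state type `Q`,
including the spelling property. -/
structure PNKA (F V Q : Type) where
  q0 : Packet F V → Q
  tr : Q → Packet F V → Q
  obs : Q → Packet F V → Bool
  spell : ∀ (q q' : Q) (α β : Packet F V),
    (tr q α = tr q' β ∨ q0 α = q0 β ∨ q0 α = tr q β) → α = β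

/-- Acceptance of a PNKA from a state. -/
def PNKA.run {Q : Type} (M : PNKA F V Q) : Q → List (Packet F V) → Packet F V → Bool
  | q, [], β => M.obs q β
  | q, β :: m, γ => M.run (M.tr q β) m γ

/-- The language of a PNKA. -/
def PNKA.lang {Q : Type} (M : PNKA F V Q) : Set (GString F V) :=
  {g | M.run (M.q0 g.1) g.2.1 g.2.2 = true}

lemma mn_last {L : Set (GString F V)} {s t : GPrefix F V} (h : MN L s t) :
    lastP s = lastP t := by
  by_contra hne
  have h1 := (h (lastP s, [], lastP s)).1
  unfold pconcat at h1
  rw [if_pos rfl, if_neg (fun he : lastP t = lastP s => hne he.symm)] at h1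
  simp at h1

lemma lastP_snoc (α : Packet F V) (w : List (Packet F V)) (β : Packet F V) :
    lastP (α, w ++ [β]) = β := by
  simp [lastP]

lemma mn_snoc {L : Set (GString F V)} {s t : GPrefix F V} (h : MN L s t)
    (β : Packet F V) : MN L (s.1, s.2 ++ [β]) (t.1, t.2 ++ [β]) := by
  intro g
  have hlt := mn_last h
  have h' := h (lastP s, β :: g.2.1, g.2.2)
  by_cases hb : β = g.1
  · subst hb
    constructor
    · simp [pconcat, lastP, ← hlt]
    · intro x hx y hy
      simp only [pconcat, lastP_snoc, eq_self_iff_true, if_true, Option.mem_def, Option.some_inj] at hx hy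
      subst hx; subst hy
      have := h'.2 (s.1, s.2 ++ g.1 :: g.2.1, g.2.2) (by simp [pconcat])
        (t.1, t.2 ++ g.1 :: g.2.1, g.2.2) (by simp [pconcat, ← hlt])
      simpa using this
  · simp [pconcat, lastP, hb]

lemma mn_obs {L : Set (GString F V)} {s t : GPrefix F V} (h : MN L s t)
    (β : Packet F V) : (s.1, s.2, β) ∈ L ↔ (t.1, t.2, β) ∈ L := by
  have hlt := mn_last h
  exact (h (lastP s, [], β)).2 (s.1, s.2, β) (by simp [pconcat])
    (t.1, t.2, β) (by simp [pconcat, ← hlt])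

def qlast (L : Set (GString F V)) : Quotient (mnSetoid L) → Packet F V :=
  Quotient.lift lastP fun _ _ h => mn_last h

def qtr (L : Set (GString F V)) (q : Quotient (mnSetoid L)) (β : Packet F V) :
    Quotient (mnSetoid L) :=
  Quotient.lift (fun s : GPrefix F V => Quotient.mk (mnSetoid L) (s.1, s.2 ++ [β]))
    (fun s t (h : MN L s t) =>
      Quotient.sound (s := mnSetoid L) (a := (s.1, s.2 ++ [β])) (b := (t.1, t.2 ++ [β]))
        (mn_snoc h β)) q

open Classical in
noncomputable def qobs (L : Set (GString F V)) (q : Quotient (mnSetoid L))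
    (β : Packet F V) : Bool :=
  Quotient.lift (fun s : GPrefix F V => decide ((s.1, s.2, β) ∈ L))
    (fun s t (h : MN L s t) => by simp [mn_obs h β]) q

lemma qtr_mk (L : Set (GString F V)) (s : GPrefix F V) (β : Packet F V) :
    qtr L (Quotient.mk (mnSetoid L) s) β = Quotient.mk (mnSetoid L) (s.1, s.2 ++ [β]) := rfl

open Classical in
lemma qobs_mk (L : Set (GString F V)) (s : GPrefix F V) (β : Packet F V) :
    (qobs L (Quotient.mk (mnSetoid L) s) β = true ↔ (s.1, s.2, β) ∈ L) := by
  show decide _ = true ↔ _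
  simp

lemma qlast_qtr (L : Set (GString F V)) (q : Quotient (mnSetoid L))
    (β : Packet F V) : qlast L (qtr L q β) = β := by
  induction q using Quotient.inductionOn with
  | h s => exact lastP_snoc s.1 s.2 β

lemma qlast_q0 (L : Set (GString F V)) (α : Packet F V) :
    qlast L (Quotient.mk (mnSetoid L) (α, [])) = α := rfl

noncomputable def quotM (L : Set (GString F V)) :
    PNKA F V (Quotient (mnSetoid L)) where
  q0 α := Quotient.mk (mnSetoid L) (α, [])
  tr := qtr L
  obs := qobs L
  spell := by
    intro q q' α β hd
    rcases hd with h | h | h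
    · have := congrArg (qlast L) h
      rwa [qlast_qtr, qlast_qtr] at this
    · have := congrArg (qlast L) h
      rwa [qlast_q0, qlast_q0] at this
    · have := congrArg (qlast L) h
      rwa [qlast_q0, qlast_qtr] at this

lemma quotM_run (L : Set (GString F V)) (w : List (Packet F V)) :
    ∀ (s : GPrefix F V) (β : Packet F V),
      ((quotM L).run (Quotient.mk (mnSetoid L) s) w β = true ↔ (s.1, s.2 ++ w, β) ∈ L) := by
  induction w with
  | nil =>
    intro s β
    simp only [PNKA.run, List.append_nil]
    exact qobs_mk L s β
  | cons γ m ih =>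
    intro s β
    show (quotM L).run (qtr L (Quotient.mk (mnSetoid L) s) γ) m β = true ↔ _
    rw [qtr_mk]
    have := ih (s.1, s.2 ++ [γ]) β
    simpa using this

/-- If the NetKAT Myhill–Nerode relation of `L` has finitely
many classes, then the quotient automaton `P_L` is well defined (its transition
and observation functions are independent of the choice of representatives),
satisfies the spelling property (i.e., it really is a PNKA), and accepts
exactly `L`.  Formally: there is a PNKA on the quotient state space whose
structure maps satisfy the defining equations of `P_L` on all representatives,
and whose language is `L`. -/
theorem quotient_pnka_well_defined (L : Set (GString F V))
    (hfin : Finite (Quotient (mnSetoid L))) :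
    ∃ M : PNKA F V (Quotient (mnSetoid L)),
      (∀ α : Packet F V,
        M.q0 α = Quotient.mk (mnSetoid L) (α, ([] : List (Packet F V)))) ∧
      (∀ (s : GPrefix F V) (β : Packet F V),
        M.tr (Quotient.mk (mnSetoid L) s) β = Quotient.mk (mnSetoid L) (s.1, s.2 ++ [β])) ∧
      (∀ (s : GPrefix F V) (β : Packet F V),
        (M.obs (Quotient.mk (mnSetoid L) s) β = true ↔ (s.1, s.2, β) ∈ L)) ∧
      M.lang = L := by
  refine ⟨quotM L, fun α => rfl, fun s β => rfl, fun s β => ?_, ?_⟩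
  · exact qobs_mk L s β
  · ext g
    obtain ⟨α, w, β⟩ := g
    show (quotM L).run (Quotient.mk (mnSetoid L) (α, [])) w β = true ↔ _
    have := quotM_run L w (α, []) β
    simpa using this

end NetKATLearn
end

section
/- Let L ⊆ GS be accepted by a PNKA M = (Q, q₀, ∂, λ). Then the NetKAT Myhill–Nerode relation ≡_L has at most |Q| equivalence classes; in particular ≡_L has finite index, and every PNKA accepting L has at least as many states as ≡_L has equivalence classes. -/
namespace NetKATLearn

variable {F V : Type}

/-- The state reached after reading a prefix. -/
def PNKA.reach {Q : Type} (M : PNKA F V Q) (p : GPrefix F V) : Q :=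
  p.2.foldl M.tr (M.q0 p.1)

theorem PNKA.run_append {Q : Type} (M : PNKA F V Q) (w m : List (Packet F V))
    (q : Q) (β : Packet F V) :
    M.run q (w ++ m) β = M.run (w.foldl M.tr q) m β := by
  induction w generalizing q with
  | nil => rfl
  | cons a w ih => simpa [PNKA.run] using ih (M.tr q a)

theorem PNKA.reach_spec {Q : Type} (M : PNKA F V Q) (p : GPrefix F V) :
    M.reach p = M.q0 (lastP p) ∨ ∃ q, M.reach p = M.tr q (lastP p) := by
  rcases List.eq_nil_or_concat p.2 with h | ⟨ws, x, h⟩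
  · left
    simp [PNKA.reach, lastP, h]
  · right
    refine ⟨ws.foldl M.tr (M.q0 p.1), ?_⟩
    simp [PNKA.reach, lastP, h, List.foldl_append]

theorem PNKA.lastP_eq {Q : Type} (M : PNKA F V Q) (s t : GPrefix F V)
    (h : M.reach s = M.reach t) : lastP s = lastP t := by
  rcases M.reach_spec s with hs | ⟨q, hs⟩ <;> rcases M.reach_spec t with ht | ⟨q', ht⟩
  · exact M.spell (M.reach s) (M.reach s) _ _ (Or.inr (Or.inl (hs ▸ ht ▸ h)))
  · exact M.spell q' q' _ _ (Or.inr (Or.inr (hs ▸ ht ▸ h)))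
  · exact (M.spell q q _ _ (Or.inr (Or.inr (ht ▸ hs ▸ h.symm)))).symm
  · exact M.spell q q' _ _ (Or.inl (hs ▸ ht ▸ h))

theorem PNKA.mn_of_reach_eq {Q : Type} (M : PNKA F V Q) (s t : GPrefix F V)
    (h : M.reach s = M.reach t) : MN M.lang s t := by
  have hl := M.lastP_eq s t h
  intro g
  constructor
  · unfold pconcat; rw [hl]; split <;> rfl
  · intro x hx y hy
    rw [Option.mem_def, pconcat] at hx hy
    split at hx
    · rename_i hs
      rw [Option.some_inj] at hx
      split at hy
      · rw [Option.some_inj] at hy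
        subst hx hy
        simp only [PNKA.lang, Set.mem_setOf_eq, M.run_append]
        rw [show s.2.foldl M.tr (M.q0 s.1) = M.reach s from rfl,
          show t.2.foldl M.tr (M.q0 t.1) = M.reach t from rfl, h]
      · exact absurd hy (by simp)
    · exact absurd hx (by simp)

/-- If `L` is accepted by a PNKA with (finite) state set `Q`,
then the NetKAT Myhill–Nerode relation `≡_L` has finite index and at most `|Q|`
equivalence classes; in particular every PNKA accepting `L` has at least as
many states as `≡_L` has classes. -/
theorem mn_classes_le_states {Q : Type} [Finite Q] (M : PNKA F V Q) :
    Finite (Quotient (mnSetoid M.lang)) ∧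
      Nat.card (Quotient (mnSetoid M.lang)) ≤ Nat.card Q := by
  have hinj : Function.Injective
      (fun c : Quotient (mnSetoid M.lang) => M.reach c.out) := by
    intro c d hcd
    have := M.mn_of_reach_eq c.out d.out hcd
    calc c = ⟦c.out⟧ := (Quotient.out_eq c).symm
      _ = ⟦d.out⟧ := Quotient.sound this
      _ = d := Quotient.out_eq d
  exact ⟨Finite.of_injective _ hinj, Nat.card_le_card_of_injective _ hinj⟩

end NetKATLearn
end

section
/- Let L ⊆ GS, let T and T' be closed, consistent, and suffix-closed observation tables for L such that T' extends T (i.e. S_α(T) ⊆ S_α(T') and E_α(T) ⊆ E_α(T') for every α ∈ Pk), and let c ∈ GS be a counterexample for the hypothesis H(T), i.e. c lies in the symmetric difference of L and L(H(T)). Suppose moreover that for every decomposition c = p·e with p ∈ Pref and e ∈ Suf, the prefix p belongs to S_{last(p)}(T'). Then the hypothesis H(T') has strictly more states than H(T). -/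
namespace NetKATLearn

variable {F V : Type}

/-- `∂⁺ p`: the state reached after processing the prefix `p`. -/
def PNKA.dplus {Q : Type} (M : PNKA F V Q) (p : GPrefix F V) : Q :=
  p.2.foldl M.tr (M.q0 p.1)

/-- Concatenation `p·e` of a prefix and a suffix, yielding a guarded string. -/
def sdot (p : GPrefix F V) (e : GSuffix F V) : GString F V := (p.1, p.2 ++ e.1, e.2)

/-- An observation table: a packet table `(S_α, E_α)` for each packet `α`. -/
structure ObsTable (F V : Type) where
  S : Packet F V → Set (GPrefix F V)
  E : Packet F V → Set (GSuffix F V)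
  S_fin : ∀ α, (S α).Finite
  E_fin : ∀ α, (E α).Finite
  S_last : ∀ α p, p ∈ S α → lastP p = α
  S_init : ∀ α, (α, ([] : List (Packet F V))) ∈ S α
  E_init : ∀ α β, (([] : List (Packet F V)), β) ∈ E α

/-- `S'_α`: the `(α·dup)`-extensions of all table prefixes. -/
def ObsTable.Sx (T : ObsTable F V) (α : Packet F V) : Set (GPrefix F V) :=
  {p | ∃ β, ∃ s ∈ T.S β, p = (s.1, s.2 ++ [α])}

-- `row_α(s)` as a Boolean function on suffixes: `true` on exactly the `e ∈ E_α`
-- with `s·e ∈ L`.  Two prefixes have equal rows (as functions on `E_α`) iff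
-- these functions are equal.
open Classical in
noncomputable def rowF (L : Set (GString F V)) (T : ObsTable F V) (α : Packet F V)
    (s : GPrefix F V) : GSuffix F V → Bool :=
  fun e => decide (e ∈ T.E α ∧ sdot s e ∈ L)

/-- The observation table is closed. -/
def ObsTable.Closed (T : ObsTable F V) (L : Set (GString F V)) : Prop :=
  ∀ α p, p ∈ T.Sx α → ∃ s ∈ T.S α, rowF L T α s = rowF L T α p

/-- The observation table is consistent. -/
def ObsTable.Consistent (T : ObsTable F V) (L : Set (GString F V)) : Prop :=
  ∀ (α β : Packet F V) (s s' : GPrefix F V), s ∈ T.S α → s' ∈ T.S α →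
    rowF L T α s = rowF L T α s' →
    rowF L T β (s.1, s.2 ++ [β]) = rowF L T β (s'.1, s'.2 ++ [β])

/-- The observation table is suffix-closed. -/
def ObsTable.SufClosed (T : ObsTable F V) : Prop :=
  ∀ (α β : Packet F V) (m : List (Packet F V)) (γ : Packet F V),
    (β :: m, γ) ∈ T.E α → (m, γ) ∈ T.E β

/-- States of the hypothesis automaton: the pairs `(α, row_α(s))` for `s ∈ S_α`. -/
def HState (L : Set (GString F V)) (T : ObsTable F V) : Type :=
  {x : Packet F V × (GSuffix F V → Bool) // ∃ s ∈ T.S x.1, rowF L T x.1 s = x.2}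

/-- The hypothesis PNKA `H(T)` built from a closed observation table:
`q₀ α = (α, row_α((α, [])))`, `∂ (α, row_α s) β = (β, row_β (s·(β·dup)))`, and
`λ (α, row_α s) β = T_α(s, ([], β))`. -/
noncomputable def hypAut (L : Set (GString F V)) (T : ObsTable F V)
    (hc : T.Closed L) : PNKA F V (HState L T) where
  q0 := fun α => ⟨(α, rowF L T α (α, [])), ⟨(α, []), T.S_init α, rfl⟩⟩
  tr := fun q β =>
    ⟨(β, rowF L T β ((Classical.choose q.2).1, (Classical.choose q.2).2 ++ [β])), by
      have hspec := Classical.choose_spec q.2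
      exact hc β _ ⟨q.1.1, Classical.choose q.2, hspec.1, rfl⟩⟩
  obs := fun q β => q.1.2 ([], β)
  spell := by
    rintro q q' α β (h | h | h) <;> exact congrArg (fun x => x.1.1) h

/-- The set of all table prefixes `⋃_{α} (S_α ∪ S'_α)`. -/
def ObsTable.prefixes (T : ObsTable F V) : Set (GPrefix F V) :=
  {p | ∃ α, p ∈ T.S α ∨ p ∈ T.Sx α}

/-- Equality of `T'`-rows implies equality of `T`-rows when `T'` extends `T`. -/
lemma rowF_restrict (L : Set (GString F V)) (T T' : ObsTable F V)
    (hextE : ∀ α, T.E α ⊆ T'.E α) (α : Packet F V) {a b : GPrefix F V}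
    (h : rowF L T' α a = rowF L T' α b) : rowF L T α a = rowF L T α b := by
  funext e
  have he : (e ∈ T'.E α ∧ sdot a e ∈ L) ↔ (e ∈ T'.E α ∧ sdot b e ∈ L) := by
    have := congrFun h e
    simpa only [rowF, decide_eq_decide] using this
  simp only [rowF, decide_eq_decide]
  constructor
  · rintro ⟨hE, hL⟩; exact ⟨hE, (he.mp ⟨hextE α hE, hL⟩).2⟩
  · rintro ⟨hE, hL⟩; exact ⟨hE, (he.mpr ⟨hextE α hE, hL⟩).2⟩

lemma hstate_finite [Finite F] [Finite V] (L : Set (GString F V)) (T : ObsTable F V) :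
    Finite (HState L T) := by
  have hA : {x : Packet F V × (GSuffix F V → Bool) |
      ∃ s ∈ T.S x.1, rowF L T x.1 s = x.2}.Finite := by
    have hsub : {x : Packet F V × (GSuffix F V → Bool) | ∃ s ∈ T.S x.1, rowF L T x.1 s = x.2}
        ⊆ ⋃ α ∈ (Set.univ : Set (Packet F V)), (fun s => (α, rowF L T α s)) '' T.S α := by
      rintro ⟨α, f⟩ ⟨s, hs, hf⟩
      exact Set.mem_biUnion (Set.mem_univ α) ⟨s, hs, by simp [hf]⟩
    exact (Set.Finite.biUnion Set.finite_univ fun α _ => (T.S_fin α).image _).subset hsub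
  exact hA.to_subtype

/-- Key induction: if every row of `T'` is realized by a `T`-representative, then
the hypothesis `H(T)` classifies `c` correctly along the decomposition. -/
lemma run_correct (L : Set (GString F V)) (T T' : ObsTable F V)
    (hcT : T.Closed L) (hconsT : T.Consistent L) (hconsT' : T'.Consistent L)
    (hextS : ∀ α, T.S α ⊆ T'.S α) (hextE : ∀ α, T.E α ⊆ T'.E α)
    (c : GString F V)
    (hdec : ∀ (w₁ w₂ : List (Packet F V)), c.2.1 = w₁ ++ w₂ →
      (c.1, w₁) ∈ T'.S (lastP (c.1, w₁)))
    (hsur : ∀ (β : Packet F V) (p : GPrefix F V), p ∈ T'.S β →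
      ∃ s ∈ T.S β, rowF L T' β s = rowF L T' β p) :
    ∀ (w₂ w₁ : List (Packet F V)), c.2.1 = w₁ ++ w₂ →
    ∀ (q : HState L T) (s : GPrefix F V), s ∈ T.S (lastP (c.1, w₁)) →
      q.1 = (lastP (c.1, w₁), rowF L T (lastP (c.1, w₁)) s) →
      rowF L T' (lastP (c.1, w₁)) s = rowF L T' (lastP (c.1, w₁)) (c.1, w₁) →
      (((hypAut L T hcT).run q w₂ c.2.2 = true) ↔ c ∈ L) := by
  intro w₂
  induction w₂ with
  | nil =>
    intro w₁ hsplit q s hsS hq1 hrow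
    set γ := lastP (c.1, w₁) with hγ
    have hw₁ : w₁ = c.2.1 := by simpa using hsplit.symm
    have hc' : sdot (c.1, w₁) ([], c.2.2) = c := by
      simp [sdot, hw₁]
    have he : (([], c.2.2) ∈ T'.E γ ∧ sdot s ([], c.2.2) ∈ L) ↔
        (([], c.2.2) ∈ T'.E γ ∧ sdot (c.1, w₁) ([], c.2.2) ∈ L) := by
      have := congrFun hrow ([], c.2.2)
      simpa only [rowF, decide_eq_decide] using this
    have hsL : sdot s ([], c.2.2) ∈ L ↔ c ∈ L := by
      rw [← hc']
      constructor
      · intro h; exact (he.mp ⟨T'.E_init γ c.2.2, h⟩).2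
      · intro h; exact (he.mpr ⟨T'.E_init γ c.2.2, h⟩).2
    show ((hypAut L T hcT).obs q c.2.2 = true) ↔ c ∈ L
    show (q.1.2 ([], c.2.2) = true) ↔ c ∈ L
    rw [hq1]
    show ((rowF L T γ s) ([], c.2.2) = true) ↔ c ∈ L
    simp only [rowF, decide_eq_true_eq]
    constructor
    · rintro ⟨_, h⟩; exact hsL.mp h
    · intro h; exact ⟨T.E_init γ c.2.2, hsL.mpr h⟩
  | cons β w₂' ih =>
    intro w₁ hsplit q s hsS hq1 hrow
    set γ := lastP (c.1, w₁) with hγ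
    have hsplit' : c.2.1 = (w₁ ++ [β]) ++ w₂' := by simpa using hsplit
    have hlast : lastP (c.1, w₁ ++ [β]) = β := by
      simp [lastP]
    -- properties of the chosen representative
    have h11 : q.1.1 = γ := congrArg Prod.fst hq1
    have h12 : q.1.2 = rowF L T γ s := congrArg Prod.snd hq1
    set t := Classical.choose q.2 with ht
    have hspec := Classical.choose_spec q.2
    rw [← ht] at hspec
    rw [h11, h12] at hspec
    have htrow : rowF L T β (t.1, t.2 ++ [β]) = rowF L T β (s.1, s.2 ++ [β]) :=
      hconsT γ β t s hspec.1 hsS hspec.2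
    -- prefix membership in T'
    have hpc : (c.1, w₁) ∈ T'.S γ := hdec w₁ (β :: w₂') hsplit
    have hpc' : (c.1, w₁ ++ [β]) ∈ T'.S β := by
      have := hdec (w₁ ++ [β]) w₂' hsplit'
      rwa [hlast] at this
    -- T'-consistency transfers the row equality one step
    have hrow' : rowF L T' β (s.1, s.2 ++ [β]) = rowF L T' β (c.1, w₁ ++ [β]) :=
      hconsT' γ β s (c.1, w₁) (hextS γ hsS) hpc hrow
    -- choose a T-representative for the extended prefix
    obtain ⟨s'', hs''S, hs''row⟩ := hsur β (c.1, w₁ ++ [β]) hpc'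
    have hs''row' : rowF L T' β s'' = rowF L T' β (s.1, s.2 ++ [β]) := by
      rw [hs''row, hrow']
    have hs''T : rowF L T β s'' = rowF L T β (s.1, s.2 ++ [β]) :=
      rowF_restrict L T T' hextE β hs''row'
    show (((hypAut L T hcT).run ((hypAut L T hcT).tr q β) w₂' c.2.2) = true) ↔ c ∈ L
    refine ih (w₁ ++ [β]) hsplit' ((hypAut L T hcT).tr q β) s'' (by rwa [hlast]) ?_ ?_
    · show (β, rowF L T β (t.1, t.2 ++ [β])) =
        (lastP (c.1, w₁ ++ [β]), rowF L T (lastP (c.1, w₁ ++ [β])) s'')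
      rw [hlast, htrow, hs''T]
    · rw [hlast, hs''row]

/-- Let `T` and `T'` be closed, consistent, and suffix-closed
observation tables for `L` with `T'` extending `T`, and let `c` be a
counterexample for the hypothesis `H(T)` (it lies in the symmetric difference
of `L` and `L(H(T))`).  If every decomposition `c = p·e` has its prefix `p` in
`S_{last p}(T')`, then `H(T')` has strictly more states than `H(T)`. -/
theorem counterexample_adds_state [Fintype F] [Fintype V] [DecidableEq V]
    (L : Set (GString F V)) (T T' : ObsTable F V)
    (hcT : T.Closed L) (hconsT : T.Consistent L) (hscT : T.SufClosed)
    (hcT' : T'.Closed L) (hconsT' : T'.Consistent L) (hscT' : T'.SufClosed)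
    (hextS : ∀ α, T.S α ⊆ T'.S α) (hextE : ∀ α, T.E α ⊆ T'.E α)
    (c : GString F V)
    (hcex : (c ∈ L ∧ c ∉ (hypAut L T hcT).lang) ∨ (c ∉ L ∧ c ∈ (hypAut L T hcT).lang))
    (hdec : ∀ (w₁ w₂ : List (Packet F V)), c.2.1 = w₁ ++ w₂ →
      (c.1, w₁) ∈ T'.S (lastP (c.1, w₁))) :
    Nat.card (HState L T) < Nat.card (HState L T') := by
  classical
  haveI : Finite (HState L T) := hstate_finite L T
  haveI : Finite (HState L T') := hstate_finite L T'
  -- the natural injection from states of H(T) to states of H(T')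
  let ι : HState L T → HState L T' := fun q =>
    ⟨(q.1.1, rowF L T' q.1.1 (Classical.choose q.2)),
     ⟨Classical.choose q.2, hextS _ (Classical.choose_spec q.2).1, rfl⟩⟩
  have hι : Function.Injective ι := by
    rintro ⟨⟨a, f⟩, hq⟩ ⟨⟨a', f'⟩, hq'⟩ h
    have h1 : a = a' := congrArg (fun x => x.1.1) h
    subst h1
    have h2 : rowF L T' a (Classical.choose hq) = rowF L T' a (Classical.choose hq') :=
      congrArg (fun x => x.1.2) h
    have h3 : rowF L T a (Classical.choose hq) = rowF L T a (Classical.choose hq') :=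
      rowF_restrict L T T' hextE a h2
    have hqs : rowF L T a (Classical.choose hq) = f := (Classical.choose_spec hq).2
    have hqs' : rowF L T a (Classical.choose hq') = f' := (Classical.choose_spec hq').2
    apply Subtype.ext
    show ((a, f) : Packet F V × (GSuffix F V → Bool)) = (a, f')
    exact congrArg (fun g => (a, g)) (by rw [← hqs, ← hqs', h3])
  refine lt_of_le_of_ne (Nat.card_le_card_of_injective ι hι) ?_
  intro hcard
  haveI := Fintype.ofFinite (HState L T)
  haveI := Fintype.ofFinite (HState L T')
  rw [Nat.card_eq_fintype_card, Nat.card_eq_fintype_card] at hcard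
  have hsurj : Function.Surjective ι :=
    ((Fintype.bijective_iff_injective_and_card ι).2 ⟨hι, hcard⟩).2
  have hsur : ∀ (β : Packet F V) (p : GPrefix F V), p ∈ T'.S β →
      ∃ s ∈ T.S β, rowF L T' β s = rowF L T' β p := by
    intro β p hp
    obtain ⟨⟨⟨a, f⟩, hq⟩, hmap⟩ := hsurj ⟨(β, rowF L T' β p), ⟨p, hp, rfl⟩⟩
    have h1 : a = β := congrArg (fun x => x.1.1) hmap
    subst h1
    have h2 : rowF L T' a (Classical.choose hq) = rowF L T' a p :=
      congrArg (fun x => x.1.2) hmap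
    exact ⟨Classical.choose hq, (Classical.choose_spec hq).1, h2⟩
  have hrun := run_correct L T T' hcT hconsT hconsT' hextS hextE c hdec hsur
    c.2.1 [] rfl ((hypAut L T hcT).q0 c.1) (c.1, []) (T.S_init c.1) rfl rfl
  rcases hcex with ⟨hL, hnot⟩ | ⟨hnL, hmem⟩
  · exact hnot (hrun.mpr hL)
  · exact hnL (hrun.mp hmem)

end NetKATLearn
end

section
/- Let fs be a nonempty field list, let (f, e) be an EPP node over fs (so f is the least field of fs), and let v ∈ V be any value. Then the SPP select(v, (f, e)) is consistent with (f, e): for every pair (α, β) ∈ Pk × Pk at which ⟦(f, e)⟧ is defined, ⟦select(v, (f, e))⟧(α, β) = ⟦(f, e)⟧(α, β). -/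
namespace NetKATLearn

variable {F V : Type}

/-- One layer of a symbolic packet program: the leaves `⊥` and `⊤`, or a node
`SPP(f, b, m, d)` whose children have type `X`.  Finite partial maps are
represented as (total) functions into `Option`; the keys of such a map are the
arguments on which it is not `none`. -/
inductive SPPLayer (V X : Type) : Type
  | bot : SPPLayer V X
  | top : SPPLayer V X
  | node (b : V → Option (V → Option X)) (m : V → Option X) (d : X) : SPPLayer V X

/-- Symbolic packet programs over a list of fields.  (Over the empty field
list an SPP is just one of the leaves `⊤`/`⊥`, encoded as a `Bool` with
`⊤ = true` and `⊥ = false`; over `f :: fs` it is a leaf or a node testing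
field `f`.) -/
def SPP (F V : Type) : List F → Type
  | [] => Bool
  | _ :: fs => SPPLayer V (SPP F V fs)

/-- The semantics of an SPP. -/
def sppSem [DecidableEq V] :
    (fs : List F) → SPP F V fs → Packet F V → Packet F V → Bool
  | [], s, _, _ => s
  | f :: fs, s, α, β =>
    match (s : SPPLayer V (SPP F V fs)) with
    | SPPLayer.bot => false
    | SPPLayer.top => decide (∀ g ∈ f :: fs, α g = β g)
    | SPPLayer.node b m d =>
      match b (α f) with
      | some bm =>
        match bm (β f) with
        | some s' => sppSem fs s' α β
        | none => false
      | none =>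
        match m (β f) with
        | some s' => sppSem fs s' α β
        | none => decide (α f = β f) && sppSem fs d α β

/-- Evidence packet programs over a list of fields: over the empty list a
Boolean leaf (`⊤ = true`, `⊥ = false`); over `f :: fs` a node `(f, e)` given
by its finite partial map `e`. -/
def EPP (F V : Type) : List F → Type
  | [] => Bool
  | _ :: fs => V → Option (V → Option (EPP F V fs))

/-- The partial semantics of an EPP. -/
def eppSem : (fs : List F) → EPP F V fs → Packet F V → Packet F V → Option Bool
  | [], b, _, _ => some b
  | f :: fs, e, α, β =>
    match (e : V → Option (V → Option (EPP F V fs))) (α f) with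
    | none => none
    | some m =>
      match m (β f) with
      | none => none
      | some e' => eppSem fs e' α β

/-- An SPP is consistent with an EPP iff their semantics agree wherever the
EPP's semantics is defined. -/
def ConsistentWith [DecidableEq V] (fs : List F) (s : SPP F V fs) (e : EPP F V fs) : Prop :=
  ∀ (α β : Packet F V) (x : Bool), eppSem fs e α β = some x → sppSem fs s α β = x

/-- A choice function, picking for each EPP node a value `v` (intended: a key
of the node's map). -/
def ChoiceFn (F V : Type) : Type :=
  (fs : List F) → (V → Option (V → Option (EPP F V fs))) → V

/-- A choice function is good if it picks a key of the node's map whenever the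
map is nonempty. -/
def GoodChoice (ch : ChoiceFn F V) : Prop :=
  ∀ (fs : List F) (e : V → Option (V → Option (EPP F V fs))),
    (∃ v, e v ≠ none) → e (ch fs e) ≠ none

/-- The `⊥` SPP over an arbitrary field list. -/
def sppBot : (fs : List F) → SPP F V fs
  | [] => false
  | _ :: _ => SPPLayer.bot

/-- `select v (f, e)` relative to a conversion `h` for the children: builds
`SPP(f, b, m, d)` where `v` is the chosen default case. -/
def selectAux [DecidableEq V] {fs : List F}
    (h : EPP F V fs → SPP F V fs) (v : V)
    (e : V → Option (V → Option (EPP F V fs))) : SPPLayer V (SPP F V fs) :=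
  SPPLayer.node
    (fun v' => if v' = v then none else
      (e v').map (fun m' => fun v'' => (m' v'').map h))
    (match e v with
      | none => fun _ => none
      | some m' => fun v' => if v' = v then none else (m' v').map h)
    (match e v with
      | none => sppBot fs
      | some m' =>
        match m' v with
        | none => sppBot fs
        | some e' => h e')

/-- `hypSPP`: generalizes an EPP to an SPP, using the choice function `ch`
to pick the default-case value at each node. -/
def hypSPP [DecidableEq V] (ch : ChoiceFn F V) :
    (fs : List F) → EPP F V fs → SPP F V fs
  | [], b => b
  | f :: fs, e => selectAux (hypSPP ch fs) (ch fs e) e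

/-- `select v (f, e)`: the SPP obtained by choosing `v` as the default case
at the root and converting all children with `hypSPP`. -/
def select [DecidableEq V] (ch : ChoiceFn F V) (f : F) {fs : List F} (v : V)
    (e : V → Option (V → Option (EPP F V fs))) : SPP F V (f :: fs) :=
  selectAux (hypSPP ch fs) v e


theorem selectAux_consistent [DecidableEq V] {f : F} {fs : List F}
    (h : EPP F V fs → SPP F V fs)
    (hh : ∀ (e' : EPP F V fs) (α β : Packet F V) (x : Bool),
      eppSem fs e' α β = some x → sppSem fs (h e') α β = x)
    (v : V) (e : V → Option (V → Option (EPP F V fs)))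
    (α β : Packet F V) (x : Bool)
    (hx : eppSem (f :: fs) e α β = some x) :
    sppSem (f :: fs) (selectAux h v e) α β = x := by
  change (match e (α f) with
    | none => none
    | some m =>
      match m (β f) with
      | none => none
      | some e' => eppSem fs e' α β) = some x at hx
  cases he : e (α f) with
  | none => simp [he] at hx
  | some m =>
    simp only [he] at hx
    cases hm : m (β f) with
    | none => simp only [hm] at hx; simp at hx
    | some e' =>
      simp only [hm] at hx
      by_cases hav : α f = v
      · subst hav
        by_cases hbv : β f = α f
        · rw [hbv] at hm
          simp [sppSem, selectAux, he, hm, hbv, hh e' α β x hx]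
        · simp [sppSem, selectAux, he, hm, hbv, hh e' α β x hx]
      · simp [sppSem, selectAux, he, hm, hav, hh e' α β x hx]

theorem hypSPP_consistent_s12 [DecidableEq V] (ch : ChoiceFn F V) :
    ∀ (fs : List F) (e : EPP F V fs) (α β : Packet F V) (x : Bool),
      eppSem fs e α β = some x → sppSem fs (hypSPP ch fs e) α β = x := by
  intro fs
  induction fs with
  | nil => intro e α β x hx; exact Option.some.inj hx
  | cons f fs ih =>
    intro e α β x hx
    exact selectAux_consistent (hypSPP ch fs) ih (ch fs e) e α β x hx

/-- For a nonempty field list `f :: fs`, an EPP node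
`(f, e)`, and any value `v ∈ V`, the SPP `select v (f, e)` is consistent with
`(f, e)`: wherever the EPP's semantics is defined, the two semantics agree. -/
theorem select_consistent [DecidableEq V] (ch : ChoiceFn F V) (hch : GoodChoice ch)
    (f : F) (fs : List F) (e : V → Option (V → Option (EPP F V fs))) (v : V)
    (α β : Packet F V) (x : Bool)
    (hx : eppSem (f :: fs) e α β = some x) :
    sppSem (f :: fs) (select ch f v e) α β = x :=
  selectAux_consistent (hypSPP ch fs) (hypSPP_consistent_s12 ch fs) v e α β x hx

end NetKATLearn
end

section
/- For every EPP e (over any field list) and every pair (α, β) ∈ Pk × Pk at which the partial semantics ⟦e⟧ is defined, ⟦hypSPP(e)⟧(α, β) = ⟦e⟧(α, β); that is, hypSPP(e) is an SPP consistent with e. -/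
namespace NetKATLearn

variable {F V : Type}

/-- For every EPP `e` (over any field list) and every packet
pair at which its partial semantics is defined, `hypSPP e` agrees with `e`:
`hypSPP e` is an SPP consistent with `e`. -/
theorem hypSPP_consistent [DecidableEq V] (ch : ChoiceFn F V) (hch : GoodChoice ch)
    (fs : List F) (e : EPP F V fs) :
    ConsistentWith fs (hypSPP ch fs e) e := by
  clear hch
  induction fs with
  | nil =>
    intro α β x hx
    simp [eppSem] at hx
    cases hx; rfl
  | cons f fs ih =>
    intro α β x hx
    simp only [eppSem] at hx
    cases he : e (α f) with
    | none => rw [he] at hx; cases hx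
    | some m =>
      rw [he] at hx
      dsimp only at hx
      cases hm : m (β f) with
      | none => rw [hm] at hx; cases hx
      | some e' =>
        rw [hm] at hx
        show sppSem (f :: fs) (selectAux (hypSPP ch fs) (ch fs e) e) α β = x
        simp only [sppSem, selectAux]
        by_cases hαv : α f = ch fs e
        · rw [hαv] at he
          simp only [hαv, if_pos rfl, he]
          by_cases hβv : β f = ch fs e
          · rw [hβv] at hm
            simp only [hβv, if_pos rfl, hm]
            simp [hαv, hβv, ih e' α β x hx]
          · simp only [if_neg hβv, hm, Option.map_some]
            exact ih e' α β x hx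
        · simp only [if_neg hαv, he, Option.map_some, hm]
          exact ih e' α β x hx

end NetKATLearn
end

section
/- Fix a target function t : Pk × Pk → Bool and consider any run of the SPP learning loop over the full field list: the learner maintains an EPP e, initially the node (f₁, ∅) over the full field list (f₁ the least field), whose semantics is nowhere defined; at each iteration it forms h := hypSPP(e); if ⟦h⟧ = t the loop stops and returns h; otherwise the teacher returns an arbitrary pair c ∈ Pk × Pk with ⟦h⟧(c) ≠ t(c), and the learner replaces e by update(e, c, t(c)). Then every such run stops after at most |Pk|² iterations, and the returned SPP h satisfies ⟦h⟧ = t. -/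
namespace NetKATLearn

variable {F V : Type}

/-- The full field list: all fields of `F`, in increasing order. -/
def fullFields (F : Type) [Fintype F] [LinearOrder F] : List F :=
  Finset.sort Finset.univ (· ≤ ·)


theorem hyp_consistent [DecidableEq V] (ch : ChoiceFn F V) :
    ∀ (fs : List F) (e : EPP F V fs), ConsistentWith fs (hypSPP ch fs e) e := by
  intro fs
  induction fs with
  | nil =>
    intro e α β x hx
    simp only [eppSem, Option.some.injEq] at hx
    simpa [sppSem, hypSPP] using Option.some.inj hx
  | cons f fs ih =>
    intro e α β x hx
    simp only [eppSem] at hx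
    cases he : e (α f) with
    | none => rw [he] at hx; exact absurd hx (by simp)
    | some mm =>
      simp only [he] at hx
      cases hm : mm (β f) with
      | none => simp only [hm] at hx; exact absurd hx (by simp)
      | some e' =>
        simp only [hm] at hx
        have hrec := ih e' α β x hx
        simp only [hypSPP, selectAux, sppSem]
        by_cases hav : α f = ch fs e
        · simp only [if_pos hav]
          rw [hav] at he
          rw [he]
          by_cases hbv : β f = ch fs e
          · simp only [if_pos hbv]
            rw [hbv] at hm
            rw [hm]
            simp [hav, hbv, hrec]
          · simp only [if_neg hbv, hm, Option.map_some]
            exact hrec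
        · simp only [if_neg hav, he, Option.map_some, hm]
          exact hrec

/-- Fix a target `t : Pk × Pk → Bool` and consider any run
of the SPP learning loop over the full field list: `es n` is the learner's
EPP at iteration `n`, whose semantics at step `0` is nowhere defined (as for
the initial node `(f₁, ∅)`); whenever the hypothesis `hypSPP (es n)` is not
yet semantically equal to `t`, the teacher returns a counterexample `cs n`
(a pair where the hypothesis disagrees with `t`), and `es (n+1)` is the
result of `update (es n) (cs n) (t (cs n))`: its semantics is `t (cs n)` at
`cs n` and agrees with that of `es n` everywhere else.  Then the run stops
after at most `|Pk|²` iterations with a correct SPP: there is some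
`n ≤ |Pk|²` at which `⟦hypSPP (es n)⟧ = t`. -/
theorem spp_learner_terminates [Fintype F] [LinearOrder F] [Fintype V] [DecidableEq V]
    (ch : ChoiceFn F V) (hch : GoodChoice ch)
    (t : Packet F V → Packet F V → Bool)
    (es : ℕ → EPP F V (fullFields F)) (cs : ℕ → Packet F V × Packet F V)
    (h0 : ∀ α β, eppSem (fullFields F) (es 0) α β = none)
    (hstep : ∀ n,
      (¬ ∀ α β, sppSem (fullFields F) (hypSPP ch (fullFields F) (es n)) α β = t α β) →
        (sppSem (fullFields F) (hypSPP ch (fullFields F) (es n)) (cs n).1 (cs n).2 ≠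
            t (cs n).1 (cs n).2) ∧
        (eppSem (fullFields F) (es (n + 1)) (cs n).1 (cs n).2 =
            some (t (cs n).1 (cs n).2)) ∧
        (∀ α β, (α, β) ≠ cs n →
            eppSem (fullFields F) (es (n + 1)) α β = eppSem (fullFields F) (es n) α β)) :
    ∃ n ≤ Fintype.card (Packet F V) * Fintype.card (Packet F V),
      ∀ α β, sppSem (fullFields F) (hypSPP ch (fullFields F) (es n)) α β = t α β := by
  classical
  set N := Fintype.card (Packet F V) * Fintype.card (Packet F V) with hN
  by_contra hcon
  push_neg at hcon
  have hrun : ∀ n ≤ N,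
      ¬ ∀ α β, sppSem (fullFields F) (hypSPP ch (fullFields F) (es n)) α β = t α β := by
    intro n hn hall
    obtain ⟨α, β, hαβ⟩ := hcon n hn
    exact hαβ (hall α β)
  set D : ℕ → Finset (Packet F V × Packet F V) := fun n =>
    Finset.univ.filter (fun p => eppSem (fullFields F) (es n) p.1 p.2 = some (t p.1 p.2))
    with hD
  have hmemD : ∀ n p, p ∈ D n ↔
      eppSem (fullFields F) (es n) p.1 p.2 = some (t p.1 p.2) := by
    intro n p; simp [hD]
  have hsub : ∀ n ≤ N, D n ⊂ D (n + 1) := by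
    intro n hn
    obtain ⟨hdis, hset, hrest⟩ := hstep n (hrun n hn)
    constructor
    · intro p hp
      rw [hmemD] at hp ⊢
      by_cases hpc : p = cs n
      · rw [hpc]; exact hset
      · rw [hrest p.1 p.2 (by simpa using hpc)]; exact hp
    · intro hsub'
      have hc1 : cs n ∈ D (n + 1) := (hmemD _ _).2 hset
      have hc0 : cs n ∈ D n := hsub' hc1
      rw [hmemD] at hc0
      exact hdis (hyp_consistent ch (fullFields F) (es n) (cs n).1 (cs n).2 _ hc0)
  have hcard : ∀ n ≤ N + 1, n ≤ (D n).card := by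
    intro n
    induction n with
    | zero => intro _; exact Nat.zero_le _
    | succ k ihk =>
      intro hk
      have hk' : k ≤ N := Nat.lt_succ_iff.mp hk
      have h1 := Finset.card_lt_card (hsub k hk')
      have h2 := ihk (le_trans hk' (Nat.le_succ N))
      omega
  have hle : (D (N + 1)).card ≤ N := by
    have := Finset.card_le_univ (D (N + 1))
    simpa [hN, Fintype.card_prod] using this
  have := hcard (N + 1) le_rfl
  omega

end NetKATLearn
end

section
/- Let G = (V_G, E_G) be a finite simple undirected graph with at least two vertices, and let to_epp(G) be the EPP encoding of G. Then: (i) every SPP consistent with to_epp(G) is a node s = SPP(f₁, b, m, d), and for every such s the set V_G \ keys(b) is an independent set of G (no two of its vertices are joined by an edge of G); (ii) conversely, for every independent set I ⊆ V_G of G there exists an SPP s = SPP(f₁, b, m, d) consistent with to_epp(G) whose test-branch key set is exactly keys(b) = V_G \ I. (This is the correctness of the reduction from IndependentSet underlying the NP-hardness of finding small SPPs consistent with a given EPP.) -/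
namespace NetKATLearn

variable {F V : Type}

/-- The value space of the IndependentSet reduction: vertices, unordered pairs
of distinct vertices, and the two markers `1` and `2` (all pairwise distinct). -/
inductive GVal (α : Type) : Type
  | vert : α → GVal α
  | pair : {s : Sym2 α // ¬ s.IsDiag} → GVal α
  | one : GVal α
  | two : GVal α
  deriving DecidableEq

/-- The EPP `e_⊤ = (f₂, {1 ↦ {2 ↦ ⊤}, 2 ↦ {1 ↦ ⊥}})` over the field list `[f₂]`
(the two fields are `f₁ = false < f₂ = true`). -/
def eTop (α : Type) [DecidableEq α] : EPP Bool (GVal α) [true] :=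
  fun v =>
    if v = GVal.one then some (fun v' => if v' = GVal.two then some true else none)
    else if v = GVal.two then some (fun v' => if v' = GVal.one then some false else none)
    else none

/-- The EPP `e_⊥ = (f₂, {1 ↦ {2 ↦ ⊥}, 2 ↦ {1 ↦ ⊤}})` over the field list `[f₂]`. -/
def eBot (α : Type) [DecidableEq α] : EPP Bool (GVal α) [true] :=
  fun v =>
    if v = GVal.one then some (fun v' => if v' = GVal.two then some false else none)
    else if v = GVal.two then some (fun v' => if v' = GVal.one then some true else none)
    else none

/-- `h(v₁, v₂)`, relative to the orientation `dir` of the edges: `e_⊤` if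
`{v₁, v₂}` is not an edge; if it is an edge, `e_⊤` in the chosen direction and
`e_⊥` in the opposite one. -/
def hEdge {α : Type} [DecidableEq α] (G : SimpleGraph α) [DecidableRel G.Adj]
    (dir : α → α → Bool) (v₁ v₂ : α) : EPP Bool (GVal α) [true] :=
  if G.Adj v₁ v₂ then (if dir v₁ v₂ then eTop α else eBot α) else eTop α

/-- `to_epp(G)`: the EPP over the field list `[f₁, f₂] = [false, true]` with
`to_epp(G) = (f₁, { v₁ ↦ { {v₁, v₂} ↦ h(v₁, v₂) : v₂ ≠ v₁ } : v₁ ∈ V_G })`. -/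
def toEPP {α : Type} [DecidableEq α] (G : SimpleGraph α) [DecidableRel G.Adj]
    (dir : α → α → Bool) : EPP Bool (GVal α) [false, true] :=
  fun v =>
    match v with
    | GVal.vert v₁ => some (fun v' =>
        match v' with
        | GVal.pair s =>
          if hmem : v₁ ∈ s.val then some (hEdge G dir v₁ (Sym2.Mem.other' hmem))
          else none
        | _ => none)
    | _ => none

section Helpers

variable {α : Type} [DecidableEq α]

/-- SPP over `[true]` returning `t` at markers `(1,2)` and `!t` at `(2,1)`. -/
def sppIf (t : Bool) : SPP Bool (GVal α) [true] :=
  SPPLayer.node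
    (fun v =>
      if v = GVal.one then some (fun w => if w = GVal.two then some t else none)
      else if v = GVal.two then some (fun w => if w = GVal.one then some (!t) else none)
      else none)
    (fun _ => none) false

lemma sppIf_eval₁ (t : Bool) {a b : Packet Bool (GVal α)}
    (h1 : a true = GVal.one) (h2 : b true = GVal.two) :
    sppSem [true] (sppIf t) a b = t := by
  simp [sppSem, sppIf, h1, h2]

lemma sppIf_eval₂ (t : Bool) {a b : Packet Bool (GVal α)}
    (h1 : a true = GVal.two) (h2 : b true = GVal.one) :
    sppSem [true] (sppIf t) a b = !t := by
  simp [sppSem, sppIf, h1, h2]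

/-- The value at markers `(1,2)` of `hEdge G dir v w`. -/
def edgeVal (G : SimpleGraph α) [DecidableRel G.Adj] (dir : α → α → Bool) (v w : α) : Bool :=
  if G.Adj v w then dir v w else true

lemma hEdge_eval₁ (G : SimpleGraph α) [DecidableRel G.Adj] (dir : α → α → Bool)
    (v w : α) {a b : Packet Bool (GVal α)}
    (h1 : a true = GVal.one) (h2 : b true = GVal.two) :
    eppSem [true] (hEdge G dir v w) a b = some (edgeVal G dir v w) := by
  unfold hEdge edgeVal
  split_ifs with h h' <;> simp [eppSem, eTop, eBot, h1, h2] <;> simp_all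

lemma hEdge_eval₂ (G : SimpleGraph α) [DecidableRel G.Adj] (dir : α → α → Bool)
    (v w : α) {a b : Packet Bool (GVal α)}
    (h1 : a true = GVal.two) (h2 : b true = GVal.one) :
    eppSem [true] (hEdge G dir v w) a b = some (!edgeVal G dir v w) := by
  unfold hEdge edgeVal
  split_ifs with h h' <;> simp [eppSem, eTop, eBot, h1, h2] <;> simp_all

lemma hEdge_sem {G : SimpleGraph α} [DecidableRel G.Adj] {dir : α → α → Bool}
    {v w : α} {a b : Packet Bool (GVal α)} {x : Bool}
    (h : eppSem [true] (hEdge G dir v w) a b = some x) :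
    (a true = GVal.one ∧ b true = GVal.two ∧ x = edgeVal G dir v w) ∨
    (a true = GVal.two ∧ b true = GVal.one ∧ x = !edgeVal G dir v w) := by
  unfold hEdge at h
  unfold edgeVal
  split_ifs at h with h1 h2 <;>
    cases ha : a true <;> cases hb : b true <;>
      simp [eppSem, eTop, eBot, ha, hb] at h <;> simp_all

lemma sppSem_congr (s : SPP Bool (GVal α) [true]) {a a' b b' : Packet Bool (GVal α)}
    (ha : a true = a' true) (hb : b true = b' true) :
    sppSem [true] s a b = sppSem [true] s a' b' := by
  cases s with
  | bot => rfl
  | top => simp [sppSem, ha, hb]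
  | node bb mm dd =>
    simp only [sppSem, ha, hb]

lemma toEPP_eval {G : SimpleGraph α} [DecidableRel G.Adj] {dir : α → α → Bool}
    {v : α} {s : {s : Sym2 α // ¬ s.IsDiag}} (hm : v ∈ s.val)
    {a b : Packet Bool (GVal α)}
    (ha : a false = GVal.vert v) (hb : b false = GVal.pair s) :
    eppSem [false, true] (toEPP G dir) a b
      = eppSem [true] (hEdge G dir v (Sym2.Mem.other' hm)) a b := by
  simp [eppSem, toEPP, ha, hb, hm]

lemma toEPP_sem_inv {G : SimpleGraph α} [DecidableRel G.Adj] {dir : α → α → Bool}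
    {a b : Packet Bool (GVal α)} {x : Bool}
    (h : eppSem [false, true] (toEPP G dir) a b = some x) :
    ∃ (v : α) (s : {s : Sym2 α // ¬ s.IsDiag}) (hm : v ∈ s.val),
      a false = GVal.vert v ∧ b false = GVal.pair s ∧
      eppSem [true] (hEdge G dir v (Sym2.Mem.other' hm)) a b = some x := by
  cases ha : a false <;> cases hb : b false <;>
    simp [eppSem, toEPP, ha, hb] at h
  case vert.pair v s =>
    by_cases hm : v ∈ s.val
    · exact ⟨v, s, hm, rfl, rfl, by simpa [hm, eppSem] using h⟩
    · simp [hm] at h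

lemma other'_left {u w : α} (hne : u ≠ w) (hm : u ∈ s(u, w)) :
    Sym2.Mem.other' hm = w := by
  rcases Sym2.eq_iff.mp (Sym2.other_spec' hm) with ⟨_, h2⟩ | ⟨h1, _⟩
  · exact h2
  · exact absurd h1 hne

lemma other'_right {u w : α} (hne : u ≠ w) (hm : w ∈ s(u, w)) :
    Sym2.Mem.other' hm = u := by
  rcases Sym2.eq_iff.mp (Sym2.other_spec' hm) with ⟨h1, _⟩ | ⟨_, h2⟩
  · exact absurd h1.symm hne
  · exact h2

/-- Packet with field `f₁ = false` set to `x` and `f₂ = true` set to `y`. -/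
def pk (x y : GVal α) : Packet Bool (GVal α) := fun f => bif f then y else x

lemma pk_false (x y : GVal α) : pk x y false = x := rfl

lemma pk_true (x y : GVal α) : pk x y true = y := rfl

end Helpers

/-- For a finite simple undirected graph `G` with at least
two vertices and any orientation `dir` of its edges:
(i) every SPP consistent with `to_epp(G)` is a node `SPP(f₁, b, m, d)`, and
the set of vertices not among the keys of `b` is an independent set of `G`;
(ii) conversely, for every independent set `I` of `G` there is a node SPP
consistent with `to_epp(G)` whose test-branch key set is exactly the set of
vertices outside `I`. -/
theorem to_epp_reduction_correct {α : Type} [Fintype α] [DecidableEq α]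
    (G : SimpleGraph α) [DecidableRel G.Adj]
    (hcard : 1 < Fintype.card α)
    (dir : α → α → Bool) (hdir : ∀ u v : α, G.Adj u v → dir u v = !dir v u) :
    (∀ s : SPP Bool (GVal α) [false, true],
      ConsistentWith [false, true] s (toEPP G dir) →
        ∃ (b : GVal α → Option (GVal α → Option (SPP Bool (GVal α) [true])))
          (m : GVal α → Option (SPP Bool (GVal α) [true]))
          (d : SPP Bool (GVal α) [true]),
          s = SPPLayer.node b m d ∧
            ∀ u w : α, b (GVal.vert u) = none → b (GVal.vert w) = none →
              ¬ G.Adj u w) ∧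
    (∀ I : Set α, (∀ u ∈ I, ∀ w ∈ I, ¬ G.Adj u w) →
      ∃ (b : GVal α → Option (GVal α → Option (SPP Bool (GVal α) [true])))
        (m : GVal α → Option (SPP Bool (GVal α) [true]))
        (d : SPP Bool (GVal α) [true]),
        ConsistentWith [false, true] (SPPLayer.node b m d) (toEPP G dir) ∧
          ∀ x : GVal α, b x ≠ none ↔ ∃ v : α, x = GVal.vert v ∧ v ∉ I) := by
  constructor
  · -- part (i)
    intro s hs
    -- a packet pair on which the EPP is `some true`
    obtain ⟨u0, w0, hne0⟩ := Fintype.exists_pair_of_one_lt_card hcard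
    have hd0 : ¬ (s(u0, w0)).IsDiag := by simp [Sym2.mk_isDiag_iff, hne0]
    have hmu0 : u0 ∈ (⟨s(u0, w0), hd0⟩ : {s : Sym2 α // ¬ s.IsDiag}).val :=
      Sym2.mem_mk_left u0 w0
    have htrue : ∃ a b : Packet Bool (GVal α),
        eppSem [false, true] (toEPP G dir) a b = some true ∧ a false ≠ b false := by
      cases ht : edgeVal G dir u0 (Sym2.Mem.other' hmu0) with
      | true =>
        refine ⟨pk (GVal.vert u0) GVal.one, pk (GVal.pair ⟨s(u0, w0), hd0⟩) GVal.two,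
          ?_, by simp [pk_false]⟩
        rw [toEPP_eval hmu0 (pk_false _ _) (pk_false _ _),
          hEdge_eval₁ G dir _ _ (pk_true _ _) (pk_true _ _), ht]
      | false =>
        refine ⟨pk (GVal.vert u0) GVal.two, pk (GVal.pair ⟨s(u0, w0), hd0⟩) GVal.one,
          ?_, by simp [pk_false]⟩
        rw [toEPP_eval hmu0 (pk_false _ _) (pk_false _ _),
          hEdge_eval₂ G dir _ _ (pk_true _ _) (pk_true _ _), ht]
        rfl
    obtain ⟨a0, b0, hab, hne⟩ := htrue
    cases s with
    | bot => exact absurd (hs a0 b0 true hab) (by simp [sppSem])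
    | top =>
      have := hs a0 b0 true hab
      simp [sppSem] at this
      exact absurd this.1 hne
    | node b m d =>
      refine ⟨b, m, d, rfl, ?_⟩
      intro u w hu hw hadj
      have hne : u ≠ w := hadj.ne
      have hd : ¬ (s(u, w)).IsDiag := by simp [Sym2.mk_isDiag_iff, hne]
      set P : {s : Sym2 α // ¬ s.IsDiag} := ⟨s(u, w), hd⟩ with hP
      have hmu : u ∈ P.val := Sym2.mem_mk_left u w
      have hmw : w ∈ P.val := Sym2.mem_mk_right u w
      have h1 : sppSem [false, true] (SPPLayer.node b m d)
          (pk (GVal.vert u) GVal.one) (pk (GVal.pair P) GVal.two) = edgeVal G dir u w := by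
        apply hs
        rw [toEPP_eval hmu (pk_false _ _) (pk_false _ _),
          hEdge_eval₁ G dir _ _ (pk_true _ _) (pk_true _ _), other'_left hne hmu]
      have h2 : sppSem [false, true] (SPPLayer.node b m d)
          (pk (GVal.vert w) GVal.one) (pk (GVal.pair P) GVal.two) = edgeVal G dir w u := by
        apply hs
        rw [toEPP_eval hmw (pk_false _ _) (pk_false _ _), other'_right hne hmw,
          hEdge_eval₁ G dir _ _ (pk_true _ _) (pk_true _ _)]
      have h3 : sppSem [false, true] (SPPLayer.node b m d)
            (pk (GVal.vert u) GVal.one) (pk (GVal.pair P) GVal.two)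
          = sppSem [false, true] (SPPLayer.node b m d)
            (pk (GVal.vert w) GVal.one) (pk (GVal.pair P) GVal.two) := by
        simp only [sppSem, pk_false, pk_true, hu, hw]
        cases m (GVal.pair P) with
        | none => simp
        | some s' => exact sppSem_congr s' rfl rfl
      rw [h1, h2] at h3
      have : edgeVal G dir u w = dir u w := by simp [edgeVal, hadj]
      have h4 : edgeVal G dir w u = !dir u w := by
        simp [edgeVal, hadj.symm, hdir u w hadj]
      rw [this, h4] at h3
      simp at h3
  · -- part (ii)
    intro I hI
    classical
    have fsymm : ∀ x y : α,
        (if x ∈ I then edgeVal G dir x y else if y ∈ I then edgeVal G dir y x else true)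
        = (if y ∈ I then edgeVal G dir y x else if x ∈ I then edgeVal G dir x y else true) := by
      intro x y
      by_cases hx : x ∈ I <;> by_cases hy : y ∈ I
      · simp [hx, hy, edgeVal, hI x hx y hy, hI y hy x hx]
      · simp [hx, hy]
      · simp [hx, hy]
      · simp [hx, hy]
    set mf : Sym2 α → Bool := Sym2.lift
      ⟨fun x y => if x ∈ I then edgeVal G dir x y else if y ∈ I then edgeVal G dir y x else true,
        fsymm⟩ with hmfdef
    refine ⟨fun v => match v with
        | GVal.vert v₁ =>
          if v₁ ∈ I then none
          else some (fun w => match w with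
            | GVal.pair s =>
              if h : v₁ ∈ s.val then
                some (sppIf (edgeVal G dir v₁ (Sym2.Mem.other' h)))
              else none
            | _ => none)
        | _ => none,
      fun w => match w with
        | GVal.pair s => some (sppIf (mf s.val))
        | _ => none,
      SPPLayer.bot, ?_, ?_⟩
    · intro a b x h
      obtain ⟨v, s, hm, ha, hb, h'⟩ := toEPP_sem_inv h
      simp only [sppSem, ha, hb]
      by_cases hv : v ∈ I
      · rw [if_pos hv]
        have hmf : ∀ w : α, s(v, w) = s.val → mf s.val = edgeVal G dir v w := by
          intro w hspec
          rw [← hspec, hmfdef, Sym2.lift_mk]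
          simp [hv]
        have hmf' := hmf _ (Sym2.other_spec' hm)
        rcases hEdge_sem h' with ⟨h1, h2, rfl⟩ | ⟨h1, h2, rfl⟩
        · rw [← hmf']; exact sppIf_eval₁ _ h1 h2
        · rw [← hmf']; exact sppIf_eval₂ _ h1 h2
      · rw [if_neg hv]
        simp only [dif_pos hm]
        rcases hEdge_sem h' with ⟨h1, h2, rfl⟩ | ⟨h1, h2, rfl⟩
        · exact sppIf_eval₁ _ h1 h2
        · exact sppIf_eval₂ _ h1 h2
    · intro x
      cases x with
      | vert v => by_cases hv : v ∈ I <;> simp [hv]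
      | pair s => simp
      | one => simp
      | two => simp

end NetKATLearn
end
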